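/- arXiv:2411.03215 — 2 statements merged into one kernel-verified Lean document; each statement's English description precedes it below -/
import Mathlib

section
/- Let ρ and X be positive semidefinite d×d complex matrices with X ≤ I (i.e., I − X positive semidefinite). Then (1/2)·‖ρ − √X ρ √X‖₁ ≤ 2·√(Tr ρ)·√(Tr(ρ(I − X))), where ‖·‖₁ is the trace norm (sum of singular values) and √X is the positive semidefinite square root of X. -/
open Matrix
open scoped ComplexOrder

/-- The positive semidefinite square root of a positive semidefinite matrix (removed from
Mathlib; restored here with its old definition). -/
noncomputable def Matrix.PosSemidef.sqrt {n : Type*} [Fintype n] [DecidableEq n] {𝕜 : Type*}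
    [RCLike 𝕜] {A : Matrix n n 𝕜} (hA : A.PosSemidef) : Matrix n n 𝕜 :=
  hA.1.eigenvectorUnitary.1 * diagonal ((↑) ∘ (√·) ∘ hA.1.eigenvalues) *
  (star hA.1.eigenvectorUnitary : Matrix n n 𝕜)

/-- The trace norm (sum of singular values) of a square complex matrix:
`‖M‖₁ = Tr √(MᴴM)`. -/
noncomputable def traceNorm {d : ℕ} (M : Matrix (Fin d) (Fin d) ℂ) : ℝ :=
  ((Matrix.posSemidef_conjTranspose_mul_self M).sqrt.trace).re

namespace Matrix.PosSemidef

open scoped MatrixOrder in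
lemma sqrt_eq_cfcSqrt {n : Type*} [Fintype n] [DecidableEq n] {A : Matrix n n ℂ}
    (hA : A.PosSemidef) : hA.sqrt = CFC.sqrt A := by
  rw [CFC.sqrt_eq_real_sqrt A hA.nonneg,
    cfcₙ_eq_cfc (hf := Real.continuous_sqrt.continuousOn) (hf0 := Real.sqrt_zero), hA.1.cfc_eq]
  rfl

open scoped MatrixOrder in
lemma posSemidef_sqrt {n : Type*} [Fintype n] [DecidableEq n] {A : Matrix n n ℂ}
    (hA : A.PosSemidef) : hA.sqrt.PosSemidef := by
  rw [hA.sqrt_eq_cfcSqrt]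
  exact (CFC.sqrt_nonneg A).posSemidef

open scoped MatrixOrder in
lemma sqrt_mul_self {n : Type*} [Fintype n] [DecidableEq n] {A : Matrix n n ℂ}
    (hA : A.PosSemidef) : hA.sqrt * hA.sqrt = A := by
  rw [hA.sqrt_eq_cfcSqrt]
  exact CFC.sqrt_mul_sqrt_self A hA.nonneg

open scoped MatrixOrder in
lemma eq_sqrt_of_sq_eq {n : Type*} [Fintype n] [DecidableEq n] {A B : Matrix n n ℂ}
    (hA : A.PosSemidef) (hB : B.PosSemidef) (hAB : A ^ 2 = B) : A = hB.sqrt := by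
  rw [hB.sqrt_eq_cfcSqrt]
  exact (CFC.sqrt_unique (by rw [← sq]; exact hAB) hA.nonneg).symm

end Matrix.PosSemidef

namespace GentleAux

variable {d : ℕ}

lemma trace_re_nonneg {M : Matrix (Fin d) (Fin d) ℂ} (hM : M.PosSemidef) : 0 ≤ M.trace.re := by
  rw [Matrix.trace, Complex.re_sum]
  refine Finset.sum_nonneg fun i _ => ?_
  have := hM.re_dotProduct_nonneg (Pi.single i 1)
  simpa [dotProduct, Pi.single_apply, Matrix.mulVec_single] using this

lemma frob_sq (A : Matrix (Fin d) (Fin d) ℂ) :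
    (Aᴴ * A).trace.re = ∑ i, ∑ j, ‖A j i‖ ^ 2 := by
  rw [Matrix.trace, Complex.re_sum]
  refine Finset.sum_congr rfl fun i _ => ?_
  rw [Matrix.diag_apply, Matrix.mul_apply, Complex.re_sum]
  refine Finset.sum_congr rfl fun j _ => ?_
  rw [Matrix.conjTranspose_apply, Complex.star_def]
  have : (starRingEnd ℂ) (A j i) * A j i = Complex.normSq (A j i) := by
    rw [mul_comm, Complex.mul_conj]
  rw [this, Complex.ofReal_re, ← Complex.sq_norm]

lemma trace_re_le_abs_sum (A B : Matrix (Fin d) (Fin d) ℂ) :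
    ((Aᴴ * B).trace).re ≤ ∑ i, ∑ j, ‖A j i‖ * ‖B j i‖ := by
  calc ((Aᴴ * B).trace).re ≤ ‖(Aᴴ * B).trace‖ := Complex.re_le_norm _
    _ = ‖(Aᴴ * B).trace‖ := rfl
    _ ≤ ∑ i, ‖(Aᴴ * B) i i‖ := norm_sum_le _ _
    _ ≤ ∑ i, ∑ j, ‖A j i‖ * ‖B j i‖ := by
        refine Finset.sum_le_sum fun i _ => ?_
        rw [Matrix.mul_apply]
        refine (norm_sum_le _ _).trans ?_
        refine le_of_eq (Finset.sum_congr rfl fun j _ => ?_)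
        rw [Matrix.conjTranspose_apply]
        simp [Complex.star_def, _root_.map_mul]

/-- Cauchy–Schwarz for the Frobenius inner product (real part version). -/
lemma trace_cs (A B : Matrix (Fin d) (Fin d) ℂ) :
    ((Aᴴ * B).trace).re ≤ Real.sqrt ((Aᴴ * A).trace.re) * Real.sqrt ((Bᴴ * B).trace.re) := by
  refine (trace_re_le_abs_sum A B).trans ?_
  rw [frob_sq A, frob_sq B]
  set f : Fin d × Fin d → ℝ := fun p => ‖A p.2 p.1‖
  set g : Fin d × Fin d → ℝ := fun p => ‖B p.2 p.1‖
  have h1 : ∑ i, ∑ j, ‖A j i‖ * ‖B j i‖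
      = ∑ p : Fin d × Fin d, f p * g p := by
    rw [← Finset.sum_product']
    rfl
  have h2 : ∑ i, ∑ j, ‖A j i‖ ^ 2 = ∑ p : Fin d × Fin d, f p ^ 2 := by
    rw [← Finset.sum_product']; rfl
  have h3 : ∑ i, ∑ j, ‖B j i‖ ^ 2 = ∑ p : Fin d × Fin d, g p ^ 2 := by
    rw [← Finset.sum_product']; rfl
  rw [h1, h2, h3]
  have hcs := Finset.sum_mul_sq_le_sq_mul_sq Finset.univ f g
  have hfg : 0 ≤ ∑ p : Fin d × Fin d, f p * g p :=
    Finset.sum_nonneg fun p _ => mul_nonneg (norm_nonneg _) (norm_nonneg _)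
  calc ∑ p : Fin d × Fin d, f p * g p
      = Real.sqrt ((∑ p : Fin d × Fin d, f p * g p) ^ 2) := (Real.sqrt_sq hfg).symm
    _ ≤ Real.sqrt ((∑ p : Fin d × Fin d, f p ^ 2) * ∑ p : Fin d × Fin d, g p ^ 2) :=
        Real.sqrt_le_sqrt hcs
    _ = _ := Real.sqrt_mul (Finset.sum_nonneg fun p _ => sq_nonneg _) _

lemma cs_bound {A B : Matrix (Fin d) (Fin d) ℂ} {a b : ℝ}
    (ha : (Aᴴ * A).trace.re ≤ a) (hb : (Bᴴ * B).trace.re ≤ b) :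
    ((Aᴴ * B).trace).re ≤ Real.sqrt a * Real.sqrt b :=
  (trace_cs A B).trans (mul_le_mul (Real.sqrt_le_sqrt ha) (Real.sqrt_le_sqrt hb)
    (Real.sqrt_nonneg _) (Real.sqrt_nonneg _))

/-- Monotonicity of `M ↦ Re Tr(Mᴴ Q M)` in `Q`. -/
lemma trace_mono {P Q : Matrix (Fin d) (Fin d) ℂ} (h : (P - Q).PosSemidef)
    (M : Matrix (Fin d) (Fin d) ℂ) :
    (Mᴴ * Q * M).trace.re ≤ (Mᴴ * P * M).trace.re := by
  have h0 := trace_re_nonneg (h.conjTranspose_mul_mul_same M)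
  have he : Mᴴ * (P - Q) * M = Mᴴ * P * M - Mᴴ * Q * M := by
    rw [Matrix.mul_sub, Matrix.sub_mul]
  rw [he, Matrix.trace_sub, Complex.sub_re] at h0
  linarith

/-- conjugation by a fixed matrix of a real diagonal. -/
noncomputable def conjD (V : Matrix (Fin d) (Fin d) ℂ) (f : Fin d → ℝ) : Matrix (Fin d) (Fin d) ℂ :=
  V * Matrix.diagonal (fun i => (f i : ℂ)) * star V

variable {V : Matrix (Fin d) (Fin d) ℂ}

lemma conjD_congr {f g : Fin d → ℝ} (h : ∀ i, f i = g i) : conjD V f = conjD V g := by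
  have hfg : f = g := funext h
  rw [hfg]

lemma conjD_mul (hV : star V * V = 1) (f g : Fin d → ℝ) :
    conjD V f * conjD V g = conjD V (fun i => f i * g i) := by
  unfold conjD
  simp only [Matrix.mul_assoc]
  rw [← Matrix.mul_assoc (star V) V, hV, Matrix.one_mul,
    ← Matrix.mul_assoc (Matrix.diagonal fun i => (f i : ℂ)), Matrix.diagonal_mul_diagonal]
  congr 2
  funext i
  push_cast
  ring

lemma conjD_one (hV' : V * star V = 1) : conjD V (fun _ => 1) = 1 := by
  unfold conjD
  have : Matrix.diagonal (fun _ : Fin d => ((1 : ℝ) : ℂ)) = 1 := by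
    rw [show (fun _ : Fin d => ((1 : ℝ) : ℂ)) = fun _ => 1 from funext fun _ => Complex.ofReal_one]
    exact Matrix.diagonal_one
  rw [this, Matrix.mul_one, hV']

lemma conjD_herm (f : Fin d → ℝ) : (conjD V f)ᴴ = conjD V f := by
  unfold conjD
  have hD : (Matrix.diagonal fun i => ((f i : ℝ) : ℂ))ᴴ = Matrix.diagonal fun i => ((f i : ℝ) : ℂ) := by
    rw [Matrix.diagonal_conjTranspose]
    have hstar : (star fun i => ((f i : ℝ) : ℂ)) = fun i => ((f i : ℝ) : ℂ) := by
      funext i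
      exact Complex.conj_ofReal _
    rw [hstar]
  rw [Matrix.star_eq_conjTranspose, Matrix.conjTranspose_mul, Matrix.conjTranspose_mul,
    Matrix.conjTranspose_conjTranspose, hD, Matrix.mul_assoc]

lemma conjD_posSemidef (f : Fin d → ℝ) (hf : ∀ i, 0 ≤ f i) : (conjD V f).PosSemidef := by
  unfold conjD
  rw [Matrix.star_eq_conjTranspose]
  refine Matrix.PosSemidef.mul_mul_conjTranspose_same ?_ V
  rw [Matrix.posSemidef_diagonal_iff]
  intro i
  exact_mod_cast Complex.zero_le_real.mpr (hf i)

lemma conjD_sub (f g : Fin d → ℝ) :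
    conjD V (fun i => f i - g i) = conjD V f - conjD V g := by
  unfold conjD
  rw [← Matrix.sub_mul, ← Matrix.mul_sub]
  congr 2
  rw [Matrix.diagonal_sub]
  funext i
  push_cast
  ring

lemma conjD_trace_re (hV : star V * V = 1) (f : Fin d → ℝ) :
    (conjD V f).trace.re = ∑ i, f i := by
  unfold conjD
  rw [Matrix.trace_mul_cycle, hV, Matrix.one_mul,
    Matrix.trace_diagonal, Complex.re_sum]
  simp

/-- Trace-norm duality witness for a Hermitian matrix: a Hermitian unitary `C` with
`‖N‖₁ = Re Tr(C N)`. -/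
lemma exists_dual {N : Matrix (Fin d) (Fin d) ℂ} (hN : N.IsHermitian) :
    ∃ C : Matrix (Fin d) (Fin d) ℂ, Cᴴ = C ∧ Cᴴ * C = 1 ∧
      traceNorm N = ((C * N).trace).re := by
  set V : Matrix (Fin d) (Fin d) ℂ := (hN.eigenvectorUnitary : Matrix (Fin d) (Fin d) ℂ) with hVdef
  have hV1 : star V * V = 1 := (Matrix.mem_unitaryGroup_iff').mp (hN.eigenvectorUnitary).2
  have hV2 : V * star V = 1 := (Matrix.mem_unitaryGroup_iff).mp (hN.eigenvectorUnitary).2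
  set ev := hN.eigenvalues with hevdef
  have hNeq : N = conjD V ev := by
    conv_lhs => rw [hN.spectral_theorem]
    rfl
  set s : Fin d → ℝ := fun i => if 0 ≤ ev i then 1 else -1 with hsdef
  refine ⟨conjD V s, conjD_herm s, ?_, ?_⟩
  · rw [conjD_herm s, conjD_mul hV1]
    have : (fun i => s i * s i) = fun _ : Fin d => (1 : ℝ) := by
      funext i
      by_cases h : 0 ≤ ev i <;> simp [hsdef, h]
    rw [this, conjD_one hV2]
  · have hCN : conjD V s * N = conjD V (fun i => |ev i|) := by
      rw [hNeq, conjD_mul hV1]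
      refine conjD_congr fun i => ?_
      by_cases h : 0 ≤ ev i
      · simp [hsdef, h, abs_of_nonneg h]
      · push_neg at h
        simp only [hsdef, not_le.mpr h, if_false, abs_of_neg h]
        ring
    have habs : (conjD V (fun i => |ev i|)).PosSemidef :=
      conjD_posSemidef _ (fun i => abs_nonneg _)
    have hsq : (conjD V (fun i => |ev i|)) ^ 2 = Nᴴ * N := by
      rw [pow_two, conjD_mul hV1, hN.eq, hNeq, conjD_mul hV1]
      exact conjD_congr fun i => abs_mul_abs_self _
    have hsqrt := habs.eq_sqrt_of_sq_eq (Matrix.posSemidef_conjTranspose_mul_self N) hsq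
    rw [traceNorm, ← hsqrt, hCN]

end GentleAux

open GentleAux

/-- Gentle measurement lemma: for `ρ, X ⪰ 0` with `X ⪯ I`,
`(1/2)‖ρ − √X ρ √X‖₁ ≤ 2 √(Tr ρ) √(Tr(ρ(I − X)))`. -/
theorem gentle_measurement {d : ℕ} (ρ X : Matrix (Fin d) (Fin d) ℂ)
    (hρ : ρ.PosSemidef) (hX : X.PosSemidef) (hXle : (1 - X).PosSemidef) :
    (1 / 2 : ℝ) * traceNorm (ρ - hX.sqrt * ρ * hX.sqrt) ≤
      2 * Real.sqrt (ρ.trace.re) * Real.sqrt ((ρ * (1 - X)).trace.re) := by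
  classical
  set S := hX.sqrt with hSdef
  set R := hρ.sqrt with hRdef
  have hRH : Rᴴ = R := hρ.posSemidef_sqrt.1
  have hRR : R * R = ρ := hρ.sqrt_mul_self
  have hSH : Sᴴ = S := hX.posSemidef_sqrt.1
  have hSS : S * S = X := hX.sqrt_mul_self
  have h1S : (1 - S)ᴴ = 1 - S := by
    rw [Matrix.conjTranspose_sub, Matrix.conjTranspose_one, hSH]
  -- spectral data of X
  set V : Matrix (Fin d) (Fin d) ℂ := (hX.1.eigenvectorUnitary : Matrix (Fin d) (Fin d) ℂ)
    with hVdef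
  have hV1 : star V * V = 1 := (Matrix.mem_unitaryGroup_iff').mp (hX.1.eigenvectorUnitary).2
  have hV2 : V * star V = 1 := (Matrix.mem_unitaryGroup_iff).mp (hX.1.eigenvectorUnitary).2
  set μ := hX.1.eigenvalues with hμdef
  have hμ0 : ∀ i, 0 ≤ μ i := fun i => hX.eigenvalues_nonneg i
  have hXeq : X = conjD V μ := by
    conv_lhs => rw [hX.1.spectral_theorem]
    rfl
  have hSeq : S = conjD V (fun i => Real.sqrt (μ i)) := rfl
  -- eigenvalues of X are at most 1
  have hone : (1 : Matrix (Fin d) (Fin d) ℂ) - Matrix.diagonal (fun i => (μ i : ℂ))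
      = Matrix.diagonal (fun i => ((1 - μ i : ℝ) : ℂ)) := by
    rw [← Matrix.diagonal_one, Matrix.diagonal_sub]
    funext i
    push_cast
    ring
  have hμ1 : ∀ i, μ i ≤ 1 := by
    have hc := hXle.conjTranspose_mul_mul_same V
    have he : Vᴴ * ((1 : Matrix (Fin d) (Fin d) ℂ) - X) * V
        = Matrix.diagonal (fun i => ((1 - μ i : ℝ) : ℂ)) := by
      rw [Matrix.mul_sub, Matrix.sub_mul, Matrix.mul_one, ← Matrix.star_eq_conjTranspose, hV1,
        hXeq]
      unfold conjD
      simp only [← Matrix.mul_assoc]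
      rw [hV1, Matrix.one_mul, Matrix.mul_assoc, hV1, Matrix.mul_one, hone]
    rw [he, Matrix.posSemidef_diagonal_iff] at hc
    intro i
    have := hc i
    rw [Complex.zero_le_real] at this
    linarith
  -- the key positivity fact
  have hCC1 : ∀ i : Fin d,
      0 ≤ (1 - μ i) - (1 - Real.sqrt (μ i)) * (1 - Real.sqrt (μ i)) := by
    intro i
    have h1 := hμ0 i
    have h2 := hμ1 i
    have hs : Real.sqrt (μ i) * Real.sqrt (μ i) = μ i := Real.mul_self_sqrt h1
    have h3 : Real.sqrt (μ i) ≤ 1 := Real.sqrt_le_one.mpr h2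
    nlinarith [Real.sqrt_nonneg (μ i)]
  have e1 : (1 : Matrix (Fin d) (Fin d) ℂ) = conjD V (fun _ => 1) := (conjD_one hV2).symm
  have e2 : (1 : Matrix (Fin d) (Fin d) ℂ) - X = conjD V (fun i => 1 - μ i) := by
    rw [conjD_sub (fun _ => 1) μ, ← e1, ← hXeq]
  have e3 : (1 : Matrix (Fin d) (Fin d) ℂ) - S = conjD V (fun i => 1 - Real.sqrt (μ i)) := by
    rw [conjD_sub (fun _ => 1) (fun i => Real.sqrt (μ i)), ← e1, ← hSeq]
  have hkey : (((1 : Matrix (Fin d) (Fin d) ℂ) - X) - (1 - S) * (1 - S)).PosSemidef := by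
    have e4 : ((1 : Matrix (Fin d) (Fin d) ℂ) - X) - (1 - S) * (1 - S)
        = conjD V (fun i => (1 - μ i) - (1 - Real.sqrt (μ i)) * (1 - Real.sqrt (μ i))) := by
      rw [conjD_sub (fun i => 1 - μ i)
        (fun i => (1 - Real.sqrt (μ i)) * (1 - Real.sqrt (μ i))), ← conjD_mul hV1, ← e3, ← e2]
    rw [e4]
    exact conjD_posSemidef _ hCC1
  -- trace norm duality
  set N := ρ - S * ρ * S with hNdef
  have hSρS : (S * ρ * S).PosSemidef := by
    have h := hρ.mul_mul_conjTranspose_same S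
    rwa [hSH] at h
  have hNH : N.IsHermitian := hρ.1.sub hSρS.1
  obtain ⟨C, hCH, hCC, hCtr⟩ := exists_dual hNH
  have hCC' : C * C = 1 := by
    nth_rewrite 1 [← hCH]
    exact hCC
  have hdec : C * N = C * ((1 - S) * ρ) + C * (S * ρ * (1 - S)) := by
    rw [hNdef]
    noncomm_ring
  -- basic trace facts
  have hRρ : Rᴴ * R = ρ := by rw [hRH, hRR]
  have hb_eq : (Rᴴ * (1 - X) * R).trace.re = (ρ * (1 - X)).trace.re := by
    rw [hRH, Matrix.trace_mul_cycle, hRR]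
  have hb0 : 0 ≤ (ρ * (1 - X)).trace.re := by
    rw [← hb_eq]
    exact trace_re_nonneg (hXle.conjTranspose_mul_mul_same R)
  -- the common Hilbert–Schmidt bound for `C ((1-S) R)`
  have hBH : (C * ((1 - S) * R))ᴴ = (R * (1 - S)) * C := by
    rw [Matrix.conjTranspose_mul, Matrix.conjTranspose_mul, hRH, hCH, h1S]
  have hBB : ((R * (1 - S)) * C) * (C * ((1 - S) * R)) = Rᴴ * ((1 - S) * (1 - S)) * R := by
    have h : C * (C * ((1 - S) * R)) = (1 - S) * R := by
      rw [← Matrix.mul_assoc, hCC', Matrix.one_mul]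
    rw [hRH, Matrix.mul_assoc (R * (1 - S)) C, h]
    simp only [Matrix.mul_assoc]
  have hB_bound : ((C * ((1 - S) * R))ᴴ * (C * ((1 - S) * R))).trace.re
      ≤ (ρ * (1 - X)).trace.re := by
    rw [hBH, hBB]
    exact (trace_mono hkey R).trans (le_of_eq hb_eq)
  -- term 1
  have t1eq : (Rᴴ * (C * ((1 - S) * R))).trace = (C * ((1 - S) * ρ)).trace := by
    rw [hRH, Matrix.trace_mul_comm, Matrix.mul_assoc C ((1 - S) * R) R,
      Matrix.mul_assoc (1 - S) R R, hRR]
  have t1 : (C * ((1 - S) * ρ)).trace.re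
      ≤ Real.sqrt ρ.trace.re * Real.sqrt ((ρ * (1 - X)).trace.re) := by
    have h := cs_bound (A := R) (B := C * ((1 - S) * R))
      (le_of_eq (by rw [hRρ])) hB_bound
    rwa [congrArg Complex.re t1eq] at h
  -- term 2
  have hSR : (S * R)ᴴ * (S * R) = Rᴴ * X * R := by
    rw [Matrix.conjTranspose_mul, hRH, hSH]
    simp only [Matrix.mul_assoc]
    rw [← Matrix.mul_assoc S S R, hSS]
  have hB2 : ((S * R)ᴴ * (S * R)).trace.re ≤ ρ.trace.re := by
    rw [hSR]
    have h1 := trace_mono (P := 1) (Q := X) hXle R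
    have h2 : Rᴴ * 1 * R = ρ := by rw [Matrix.mul_one, hRρ]
    rwa [h2] at h1
  have t2eq : (((R * (1 - S)) * C) * (S * R)).trace = (C * (S * ρ * (1 - S))).trace := by
    rw [Matrix.mul_assoc (R * (1 - S)) C (S * R), Matrix.trace_mul_comm]
    refine congrArg Matrix.trace ?_
    simp only [Matrix.mul_assoc]
    rw [← Matrix.mul_assoc R R (1 - S), hRR]
  have t2 : (C * (S * ρ * (1 - S))).trace.re
      ≤ Real.sqrt ((ρ * (1 - X)).trace.re) * Real.sqrt ρ.trace.re := by
    have h := cs_bound (A := C * ((1 - S) * R)) (B := S * R) hB_bound hB2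
    rw [hBH] at h
    rwa [congrArg Complex.re t2eq] at h
  -- combine
  have hfin : traceNorm N
      ≤ 2 * (Real.sqrt ρ.trace.re * Real.sqrt ((ρ * (1 - X)).trace.re)) := by
    rw [hCtr, hdec, Matrix.trace_add, Complex.add_re]
    have := mul_comm (Real.sqrt ((ρ * (1 - X)).trace.re)) (Real.sqrt ρ.trace.re)
    linarith [t1, t2]
  have hsq : 0 ≤ Real.sqrt ρ.trace.re * Real.sqrt ((ρ * (1 - X)).trace.re) :=
    mul_nonneg (Real.sqrt_nonneg _) (Real.sqrt_nonneg _)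
  have h2c : 2 * Real.sqrt ρ.trace.re * Real.sqrt ((ρ * (1 - X)).trace.re)
      = 2 * (Real.sqrt ρ.trace.re * Real.sqrt ((ρ * (1 - X)).trace.re)) := by ring
  rw [h2c]
  linarith [hfin, hsq]
end

section
/- Fix integers n ≥ 1, 0 ≤ i ≤ n, t ≥ 1, and set N = 2^n. For f : {0,1}^n → {0,1} define ψ_f := 2^{−n} Σ_{x'∈{0,1}^i} Σ_{x''∈{0,1}^{n−i}} Σ_{y∈{0,1}^n} (−1)^{f(x'x'') + x''·y' + f(y)} H^{⊗(n+i)}(e_{x'} ⊗ e_y) ∈ ℂ^{2^{n+i}}, where y' denotes the first n−i bits of y. Define ψ_all := 2^{−(n+i)t/2} Σ_{x'∈({0,1}^i)^t} Σ_{y∈({0,1}^n)^t} φ_{x',y} ⊗ φ'_{x',y} ∈ ℂ^{2^{(n+i)t}} ⊗ ℂ^{2^N}, where φ_{x',y} := H^{⊗(n+i)t}(e_{x'₁} ⊗ e_{y₁} ⊗ ⋯ ⊗ e_{x'_t} ⊗ e_{y_t}) and φ'_{x',y} := 2^{−(n−i)t/2} Σ_{x''∈({0,1}^{n−i})^t}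 (−1)^{Σ_{j=1}^t x''_j·y'_j} e_{ε_{x'₁x''₁} ⊕ ε_{y₁} ⊕ ⋯ ⊕ ε_{x'_tx''_t} ⊕ ε_{y_t}}. Then 2^{−N} Σ_{f:{0,1}^n→{0,1}} (|ψ_f⟩⟨ψ_f|)^{⊗t} = Tr_E |ψ_all⟩⟨ψ_all|, where Tr_E is the partial trace over the second tensor factor ℂ^{2^N}. -/
open Finset

/-- binary inner product: number of positions where both bitstrings are 1. -/
def bdot {ι : Type*} [Fintype ι] (u v : ι → Bool) : ℕ :=
  (Finset.univ.filter fun j => u j = true ∧ v j = true).card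

/-- The first `m` bits of an `n`-bit string (`m ≤ n`). -/
def firstBits {n : ℕ} (m : ℕ) (h : m ≤ n) (y : Fin n → Bool) : Fin m → Bool :=
  fun k => y (Fin.castLE h k)

/-- Concatenation of an `i`-bit string with an `(n-i)`-bit string into an `n`-bit string. -/
def concatBits {n i : ℕ} (h : i ≤ n) (x' : Fin i → Bool) (x'' : Fin (n - i) → Bool) :
    Fin n → Bool :=
  fun k => if hk : (k : ℕ) < i then x' ⟨k, hk⟩ else x'' ⟨(k : ℕ) - i, by omega⟩

/-- `H^{⊗m} e_x` : component at `y` is `2^{-m/2} (-1)^{x·y}`. -/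
noncomputable def hadKet {m : ℕ} (x : Fin m → Bool) : EuclideanSpace ℂ (Fin m → Bool) :=
  WithLp.toLp 2 (fun y => ((Real.sqrt (2 ^ m) : ℝ) : ℂ)⁻¹ * (-1) ^ (bdot x y))

/-- The state `ψ_f = 2^{-n} Σ_{x',x'',y} (-1)^{f(x'x'') + x''·y' + f(y)} H^{⊗(n+i)}(e_{x'} ⊗ e_y)`
(the `n+i`-qubit register is indexed by `Fin (i+n) → Bool`). -/
noncomputable def psiF (n i : ℕ) (h : i ≤ n) (f : (Fin n → Bool) → Bool) :
    EuclideanSpace ℂ (Fin (i + n) → Bool) :=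
  ((2 : ℂ) ^ n)⁻¹ • ∑ x' : Fin i → Bool, ∑ x'' : Fin (n - i) → Bool, ∑ y : Fin n → Bool,
    ((-1 : ℂ) ^ ((if f (concatBits h x' x'') then 1 else 0) +
        bdot x'' (firstBits (n - i) (by omega) y) + (if f y then 1 else 0))) •
      hadKet (Fin.append x' y)

/-- `φ_{x',y} = H^{⊗(n+i)t}(e_{x'₁} ⊗ e_{y₁} ⊗ ⋯ ⊗ e_{x'_t} ⊗ e_{y_t})`. -/
noncomputable def phiKet (n i t : ℕ) (x' : Fin t → (Fin i → Bool))
    (y : Fin t → (Fin n → Bool)) :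
    EuclideanSpace ℂ (Fin t → (Fin (i + n) → Bool)) :=
  WithLp.toLp 2 (fun z => ∏ j : Fin t, hadKet (Fin.append (x' j) (y j)) (z j))

/-- The bitstring `ε_{x₁} ⊕ ε_{y₁} ⊕ ⋯ ⊕ ε_{x_t} ⊕ ε_{y_t} ∈ {0,1}^{2^n}`:
the bit at position `s` is the parity of the number of `j` with `x_j = s` or `y_j = s`. -/
def xorInd {n t : ℕ} (xs ys : Fin t → (Fin n → Bool)) : (Fin n → Bool) → Bool :=
  fun s => decide (Odd ((Finset.univ.filter fun j => xs j = s).card +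
    (Finset.univ.filter fun j => ys j = s).card))

/-- `φ'_{x',y} = 2^{-(n-i)t/2} Σ_{x''} (-1)^{Σ_j x''_j·y'_j}
     e_{ε_{x'₁x''₁} ⊕ ε_{y₁} ⊕ ⋯ ⊕ ε_{x'_tx''_t} ⊕ ε_{y_t}}`. -/
noncomputable def phiKet' (n i t : ℕ) (h : i ≤ n) (x' : Fin t → (Fin i → Bool))
    (y : Fin t → (Fin n → Bool)) :
    EuclideanSpace ℂ ((Fin n → Bool) → Bool) :=
  ((Real.sqrt (2 ^ ((n - i) * t)) : ℝ) : ℂ)⁻¹ •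
    ∑ x'' : Fin t → (Fin (n - i) → Bool),
      ((-1 : ℂ) ^ (∑ j : Fin t, bdot (x'' j) (firstBits (n - i) (by omega) (y j)))) •
        EuclideanSpace.single (xorInd (fun j => concatBits h (x' j) (x'' j)) y) (1 : ℂ)

/-- tensor of two vectors in the concrete (Euclidean) model of the tensor product. -/
noncomputable def tensorE {ι₁ ι₂ : Type*} [Fintype ι₁] [Fintype ι₂]
    (u : EuclideanSpace ℂ ι₁) (v : EuclideanSpace ℂ ι₂) : EuclideanSpace ℂ (ι₁ × ι₂) :=
  WithLp.toLp 2 (fun p => u p.1 * v p.2)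

/-- `ψ_all = 2^{-(n+i)t/2} Σ_{x',y} φ_{x',y} ⊗ φ'_{x',y}`. -/
noncomputable def psiAll (n i t : ℕ) (h : i ≤ n) :
    EuclideanSpace ℂ ((Fin t → (Fin (i + n) → Bool)) × ((Fin n → Bool) → Bool)) :=
  ((Real.sqrt (2 ^ ((n + i) * t)) : ℝ) : ℂ)⁻¹ •
    ∑ x' : Fin t → (Fin i → Bool), ∑ y : Fin t → (Fin n → Bool),
      tensorE (phiKet n i t x' y) (phiKet' n i t h x' y)


/-! ### Auxiliary machinery -/

lemma euc_sum_apply {ι κ : Type*} [Fintype ι] (s : Finset κ) (F : κ → EuclideanSpace ℂ ι)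
    (z : ι) : (∑ c ∈ s, F c) z = ∑ c ∈ s, F c z := by
  classical
  induction s using Finset.induction with
  | empty => rfl
  | insert x s hx ih => rw [Finset.sum_insert hx, Finset.sum_insert hx, ← ih]; rfl

lemma euc_smul_apply {ι : Type*} [Fintype ι] (c : ℂ) (v : EuclideanSpace ℂ ι) (z : ι) :
    (c • v) z = c * v z := rfl

lemma conj_hadKet {m : ℕ} (x z : Fin m → Bool) :
    (starRingEnd ℂ) (hadKet x z) = hadKet x z := by
  simp [hadKet, map_mul, map_inv₀, Complex.conj_ofReal, map_pow]

lemma ind_sum {β : Type*} [Fintype β] [DecidableEq β] (u v : β) :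
    ∑ w : β, (if w = u then (1:ℂ) else 0) * (if w = v then 1 else 0) =
      if u = v then 1 else 0 := by
  simp only [ite_mul, one_mul, zero_mul]
  rw [Finset.sum_ite_eq' Finset.univ u (fun w => if w = v then (1:ℂ) else 0)]
  simp

/-- counting lemma: sum of indicators grouped by fibers. -/
lemma cnt_eq {t : ℕ} {α : Type*} [Fintype α] [DecidableEq α] (p : Fin t → α) (f : α → Bool) :
    ∑ j : Fin t, (if f (p j) then 1 else 0) =
      ∑ s : α, (Finset.univ.filter fun j => p j = s).card * (if f s then (1:ℕ) else 0) := by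
  rw [← Finset.sum_fiberwise' Finset.univ p (fun s => if f s then (1:ℕ) else 0)]
  exact Finset.sum_congr rfl fun s _ => by rw [Finset.sum_const, smul_eq_mul]

/-- The key `f`-average lemma. -/
lemma sum_f_sign {n t : ℕ} (p q r w : Fin t → (Fin n → Bool)) :
    ∑ f : (Fin n → Bool) → Bool,
      (-1:ℂ) ^ ((∑ j : Fin t, ((if f (p j) then 1 else 0) + (if f (q j) then 1 else 0))) +
        (∑ j : Fin t, ((if f (r j) then 1 else 0) + (if f (w j) then 1 else 0)))) =
      if xorInd p q = xorInd r w then (2:ℂ)^(2^n) else 0 := by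
  classical
  set M : (Fin n → Bool) → ℕ := fun s =>
    (Finset.univ.filter fun j => p j = s).card + (Finset.univ.filter fun j => q j = s).card +
    ((Finset.univ.filter fun j => r j = s).card + (Finset.univ.filter fun j => w j = s).card)
    with hM
  have hexp : ∀ f : (Fin n → Bool) → Bool,
      ((∑ j : Fin t, ((if f (p j) then 1 else 0) + (if f (q j) then 1 else 0))) +
        (∑ j : Fin t, ((if f (r j) then 1 else 0) + (if f (w j) then 1 else 0)))) =
      ∑ s : Fin n → Bool, M s * (if f s then 1 else 0) := by
    intro f
    rw [Finset.sum_add_distrib, Finset.sum_add_distrib, cnt_eq p f, cnt_eq q f, cnt_eq r f,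
      cnt_eq w f, ← Finset.sum_add_distrib, ← Finset.sum_add_distrib, ← Finset.sum_add_distrib]
    refine Finset.sum_congr rfl fun s _ => ?_
    simp only [hM]
    split_ifs <;> ring
  trans (∑ f : (Fin n → Bool) → Bool, ∏ s : Fin n → Bool, ((-1:ℂ) ^ (M s)) ^ (if f s then 1 else 0))
  · refine Finset.sum_congr rfl fun f _ => ?_
    rw [hexp f, ← Finset.prod_pow_eq_pow_sum]
    exact Finset.prod_congr rfl fun s _ => by rw [← pow_mul]
  trans (∏ s : Fin n → Bool, ∑ b : Bool, ((-1:ℂ) ^ (M s)) ^ (if b = true then 1 else 0))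
  · exact (Fintype.prod_sum fun (s : Fin n → Bool) (b : Bool) => ((-1:ℂ) ^ (M s)) ^ (if b = true then 1 else 0)).symm
  trans (∏ s : Fin n → Bool, ((-1:ℂ) ^ (M s) + 1))
  · refine Finset.prod_congr rfl fun s _ => ?_
    rw [Fintype.sum_bool]; simp
  by_cases hc : xorInd p q = xorInd r w
  · simp only [hc, if_true]
    have heven : ∀ s : Fin n → Bool, Even (M s) := by
      intro s
      have := congrFun hc s
      simp only [xorInd, decide_eq_decide] at this
      simp only [hM]
      simp only [Nat.odd_iff] at this
      rw [Nat.even_iff]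
      omega
    have h2 : ∀ s ∈ (Finset.univ : Finset (Fin n → Bool)), ((-1:ℂ) ^ (M s) + 1) = 2 := fun s _ => by
      rw [(heven s).neg_one_pow]; norm_num
    rw [Finset.prod_congr rfl h2, Finset.prod_const, Finset.card_univ]
    congr 1
    simp [Fintype.card_fun]
  · simp only [hc, if_false]
    have : ∃ s : Fin n → Bool, ¬ Even (M s) := by
      by_contra hall
      push_neg at hall
      apply hc
      funext s
      have := hall s
      simp only [hM] at this
      rw [Nat.even_iff] at this
      simp only [xorInd, decide_eq_decide, Nat.odd_iff]
      omega
    obtain ⟨s₀, hs₀⟩ := this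
    refine Finset.prod_eq_zero (Finset.mem_univ s₀) ?_
    rw [(Nat.odd_iff.mpr (by rw [Nat.even_iff] at hs₀; omega)).neg_one_pow]
    ring

lemma psiF_apply {n i : ℕ} (h : i ≤ n) (f : (Fin n → Bool) → Bool) (z : Fin (i+n) → Bool) :
    psiF n i h f z = ((2:ℂ)^n)⁻¹ * ∑ x' : Fin i → Bool, ∑ x'' : Fin (n-i) → Bool,
      ∑ y : Fin n → Bool,
      ((-1:ℂ) ^ ((if f (concatBits h x' x'') then 1 else 0) +
        bdot x'' (firstBits (n-i) (by omega) y) + (if f y then 1 else 0))) *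
        hadKet (Fin.append x' y) z := by
  simp only [psiF, euc_sum_apply, euc_smul_apply]

/-- triple-of-functions index type used for the normal form. -/
abbrev PT (n i t : ℕ) :=
  (Fin t → (Fin i → Bool)) × (Fin t → (Fin n → Bool)) × (Fin t → (Fin (n - i) → Bool))

/-- single-site summand of `psiF`. -/
noncomputable def Tq (n i : ℕ) (h : i ≤ n) (f : (Fin n → Bool) → Bool)
    (c : (Fin i → Bool) × (Fin n → Bool) × (Fin (n - i) → Bool)) (z : Fin (i + n) → Bool) : ℂ :=
  (-1:ℂ) ^ ((if f (concatBits h c.1 c.2.2) then 1 else 0) +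
      bdot c.2.2 (firstBits (n - i) (by omega) c.2.1) + (if f c.2.1 then 1 else 0)) *
    hadKet (Fin.append c.1 c.2.1) z

/-- the `f`-independent weight. -/
noncomputable def gg (n i t : ℕ) (b : Fin t → (Fin (i + n) → Bool)) (P : PT n i t) : ℂ :=
  (-1:ℂ) ^ (∑ j : Fin t, bdot (P.2.2 j) (firstBits (n - i) (by omega) (P.2.1 j))) *
    ∏ j : Fin t, hadKet (Fin.append (P.1 j) (P.2.1 j)) (b j)

/-- the purifying register bitstring attached to an index. -/
def uu (n i t : ℕ) (h : i ≤ n) (P : PT n i t) : (Fin n → Bool) → Bool :=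
  xorInd (fun j => concatBits h (P.1 j) (P.2.2 j)) P.2.1

/-- the common normal form of both sides. -/
noncomputable def NF (n i t : ℕ) (h : i ≤ n) (a a' : Fin t → (Fin (i + n) → Bool)) : ℂ :=
  (((2:ℂ) ^ n) ^ t)⁻¹ * (((2:ℂ) ^ n) ^ t)⁻¹ *
    ∑ P : PT n i t, ∑ Q : PT n i t,
      gg n i t a P * gg n i t a' Q * (if uu n i t h P = uu n i t h Q then 1 else 0)

/-- functions into a triple product are a triple of functions. -/
def e3 (n i t : ℕ) :
    (Fin t → ((Fin i → Bool) × (Fin n → Bool) × (Fin (n - i) → Bool))) ≃ PT n i t where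
  toFun C := (fun j => (C j).1, fun j => (C j).2.1, fun j => (C j).2.2)
  invFun P := fun j => (P.1 j, P.2.1 j, P.2.2 j)
  left_inv C := by funext j; simp
  right_inv P := rfl

lemma psiF_applyK {n i : ℕ} (h : i ≤ n) (f : (Fin n → Bool) → Bool) (z : Fin (i + n) → Bool) :
    psiF n i h f z = ((2:ℂ) ^ n)⁻¹ *
      ∑ c : (Fin i → Bool) × (Fin n → Bool) × (Fin (n - i) → Bool), Tq n i h f c z := by
  rw [psiF_apply]
  congr 1
  rw [Fintype.sum_prod_type]
  refine Finset.sum_congr rfl fun x' _ => ?_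
  rw [Fintype.sum_prod_type, Finset.sum_comm]
  exact Finset.sum_congr rfl fun x'' _ => Finset.sum_congr rfl fun y _ => rfl

lemma prod_psiF {n i t : ℕ} (h : i ≤ n) (f : (Fin n → Bool) → Bool)
    (b : Fin t → (Fin (i + n) → Bool)) :
    ∏ j : Fin t, psiF n i h f (b j) = (((2:ℂ) ^ n) ^ t)⁻¹ *
      ∑ C : Fin t → ((Fin i → Bool) × (Fin n → Bool) × (Fin (n - i) → Bool)),
        ∏ j : Fin t, Tq n i h f (C j) (b j) := by
  calc ∏ j : Fin t, psiF n i h f (b j)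
      = ∏ j : Fin t, (((2:ℂ) ^ n)⁻¹ *
          ∑ c : (Fin i → Bool) × (Fin n → Bool) × (Fin (n - i) → Bool), Tq n i h f c (b j)) :=
        Finset.prod_congr rfl fun j _ => psiF_applyK h f (b j)
    _ = (∏ _j : Fin t, ((2:ℂ) ^ n)⁻¹) * ∏ j : Fin t,
          ∑ c : (Fin i → Bool) × (Fin n → Bool) × (Fin (n - i) → Bool), Tq n i h f c (b j) :=
        Finset.prod_mul_distrib
    _ = _ := by
        rw [Finset.prod_const, Finset.card_univ, Fintype.card_fin, inv_pow, Fintype.prod_sum]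

lemma conj_psiF {n i : ℕ} (h : i ≤ n) (f : (Fin n → Bool) → Bool) (z : Fin (i + n) → Bool) :
    (starRingEnd ℂ) (psiF n i h f z) = psiF n i h f z := by
  rw [psiF_apply, map_mul, map_sum]
  congr 1
  · rw [map_inv₀, map_pow, Complex.conj_ofNat]
  · refine Finset.sum_congr rfl fun x' _ => ?_
    rw [map_sum]
    refine Finset.sum_congr rfl fun x'' _ => ?_
    rw [map_sum]
    refine Finset.sum_congr rfl fun y _ => ?_
    rw [map_mul, conj_hadKet, map_pow]
    simp

lemma sum_comm3 {α β γ M : Type*} [AddCommMonoid M] [Fintype α] [Fintype β] [Fintype γ]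
    (f : α → β → γ → M) :
    ∑ x : α, ∑ y : β, ∑ z : γ, f x y z = ∑ y : β, ∑ z : γ, ∑ x : α, f x y z := by
  rw [Finset.sum_comm]
  exact Finset.sum_congr rfl fun y _ => Finset.sum_comm

lemma prod_Tq {n i t : ℕ} (h : i ≤ n) (f : (Fin n → Bool) → Bool)
    (C : Fin t → ((Fin i → Bool) × (Fin n → Bool) × (Fin (n - i) → Bool)))
    (b : Fin t → (Fin (i + n) → Bool)) :
    ∏ j : Fin t, Tq n i h f (C j) (b j) =
      (-1:ℂ) ^ (∑ j : Fin t, ((if f (concatBits h (C j).1 (C j).2.2) then 1 else 0) +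
          (if f ((C j).2.1) then 1 else 0))) * gg n i t b (e3 n i t C) := by
  unfold Tq gg e3
  simp only [Equiv.coe_fn_mk]
  rw [Finset.prod_mul_distrib, Finset.prod_pow_eq_pow_sum]
  have hsplit : ∑ j : Fin t, ((if f (concatBits h (C j).1 (C j).2.2) then 1 else 0) +
      bdot (C j).2.2 (firstBits (n - i) (by omega) ((C j).2.1)) +
      (if f ((C j).2.1) then 1 else 0)) =
      (∑ j : Fin t, ((if f (concatBits h (C j).1 (C j).2.2) then 1 else 0) +
        (if f ((C j).2.1) then 1 else 0))) +
      ∑ j : Fin t, bdot (C j).2.2 (firstBits (n - i) (by omega) ((C j).2.1)) := by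
    rw [← Finset.sum_add_distrib]
    exact Finset.sum_congr rfl fun j _ => by ring
  rw [hsplit, pow_add, mul_assoc]

lemma lhs_eq (n i t : ℕ) (h : i ≤ n) (a a' : Fin t → (Fin (i + n) → Bool)) :
    ((2 : ℂ) ^ (2 ^ n))⁻¹ *
        ∑ f : (Fin n → Bool) → Bool,
          (∏ j : Fin t, psiF n i h f (a j)) *
            (starRingEnd ℂ) (∏ j : Fin t, psiF n i h f (a' j)) = NF n i t h a a' := by
  classical
  have hconj : ∀ f : (Fin n → Bool) → Bool,
      (starRingEnd ℂ) (∏ j : Fin t, psiF n i h f (a' j)) =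
        ∏ j : Fin t, psiF n i h f (a' j) := fun f => by
    rw [map_prod]; exact Finset.prod_congr rfl fun j _ => conj_psiF h f _
  have key : ∀ f : (Fin n → Bool) → Bool,
      (∏ j : Fin t, psiF n i h f (a j)) * (∏ j : Fin t, psiF n i h f (a' j)) =
      (((2:ℂ) ^ n) ^ t)⁻¹ * (((2:ℂ) ^ n) ^ t)⁻¹ *
        ∑ C : Fin t → ((Fin i → Bool) × (Fin n → Bool) × (Fin (n - i) → Bool)),
          ∑ C' : Fin t → ((Fin i → Bool) × (Fin n → Bool) × (Fin (n - i) → Bool)),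
            (∏ j : Fin t, Tq n i h f (C j) (a j)) *
              (∏ j : Fin t, Tq n i h f (C' j) (a' j)) := fun f => by
    rw [prod_psiF h, prod_psiF h, mul_mul_mul_comm, Finset.sum_mul_sum]
  simp only [hconj, key]
  -- pull the constants out and reorder the sums
  rw [← Finset.mul_sum, ← mul_assoc, mul_comm (((2:ℂ)^(2^n))⁻¹), mul_assoc]
  unfold NF
  congr 1
  rw [sum_comm3]
  have inner : ∀ C C' : Fin t → ((Fin i → Bool) × (Fin n → Bool) × (Fin (n - i) → Bool)),
      (∑ f : (Fin n → Bool) → Bool,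
        (∏ j : Fin t, Tq n i h f (C j) (a j)) * (∏ j : Fin t, Tq n i h f (C' j) (a' j))) =
      (2:ℂ) ^ (2 ^ n) * (gg n i t a (e3 n i t C) * gg n i t a' (e3 n i t C') *
        (if uu n i t h (e3 n i t C) = uu n i t h (e3 n i t C') then 1 else 0)) := by
    intro C C'
    have step : ∀ f : (Fin n → Bool) → Bool,
        (∏ j : Fin t, Tq n i h f (C j) (a j)) * (∏ j : Fin t, Tq n i h f (C' j) (a' j)) =
        (gg n i t a (e3 n i t C) * gg n i t a' (e3 n i t C')) *
          (-1:ℂ) ^ ((∑ j : Fin t, ((if f (concatBits h (C j).1 (C j).2.2) then 1 else 0) +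
              (if f ((C j).2.1) then 1 else 0))) +
            (∑ j : Fin t, ((if f (concatBits h (C' j).1 (C' j).2.2) then 1 else 0) +
              (if f ((C' j).2.1) then 1 else 0)))) := fun f => by
      rw [prod_Tq h, prod_Tq h, pow_add]; ring
    simp only [step]
    rw [← Finset.mul_sum,
      sum_f_sign (fun j => concatBits h (C j).1 (C j).2.2) (fun j => (C j).2.1)
        (fun j => concatBits h (C' j).1 (C' j).2.2) (fun j => (C' j).2.1)]
    have huu : (xorInd (fun j => concatBits h (C j).1 (C j).2.2) fun j => (C j).2.1) =
        uu n i t h (e3 n i t C) := rfl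
    have huu' : (xorInd (fun j => concatBits h (C' j).1 (C' j).2.2) fun j => (C' j).2.1) =
        uu n i t h (e3 n i t C') := rfl
    rw [huu, huu']
    split_ifs <;> ring
  simp only [inner]
  simp only [← Finset.mul_sum]
  rw [← mul_assoc, inv_mul_cancel₀ (pow_ne_zero _ (two_ne_zero)), one_mul]
  refine Fintype.sum_equiv (e3 n i t) _ _ fun C => ?_
  exact Fintype.sum_equiv (e3 n i t) _ _ fun C' => rfl

lemma phiKet'_apply {n i t : ℕ} (h : i ≤ n) (x' : Fin t → (Fin i → Bool))
    (y : Fin t → (Fin n → Bool)) (wv : (Fin n → Bool) → Bool) :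
    phiKet' n i t h x' y wv = ((Real.sqrt (2 ^ ((n - i) * t)) : ℝ) : ℂ)⁻¹ *
      ∑ x'' : Fin t → (Fin (n - i) → Bool),
        ((-1:ℂ) ^ (∑ j : Fin t, bdot (x'' j) (firstBits (n - i) (by omega) (y j)))) *
          (if wv = xorInd (fun j => concatBits h (x' j) (x'' j)) y then 1 else 0) := by
  simp only [phiKet', euc_smul_apply, euc_sum_apply, EuclideanSpace.single_apply, mul_one]

lemma psiAll_apply {n i t : ℕ} (h : i ≤ n) (b : Fin t → (Fin (i + n) → Bool))
    (wv : (Fin n → Bool) → Bool) :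
    psiAll n i t h (b, wv) =
      (((Real.sqrt (2 ^ ((n + i) * t)) : ℝ) : ℂ)⁻¹ *
        ((Real.sqrt (2 ^ ((n - i) * t)) : ℝ) : ℂ)⁻¹) *
      ∑ P : PT n i t, gg n i t b P * (if wv = uu n i t h P then 1 else 0) := by
  simp only [psiAll, euc_smul_apply, euc_sum_apply, tensorE, phiKet, phiKet'_apply h, PiLp.toLp_apply]
  simp only [Fintype.sum_prod_type, gg, uu, Finset.mul_sum]
  refine Finset.sum_congr rfl fun x' _ => Finset.sum_congr rfl fun y _ =>
    Finset.sum_congr rfl fun x'' _ => by ring_nf; congr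

lemma conj_gg {n i t : ℕ} (b : Fin t → (Fin (i + n) → Bool)) (P : PT n i t) :
    (starRingEnd ℂ) (gg n i t b P) = gg n i t b P := by
  unfold gg
  rw [map_mul, map_pow, map_prod]
  simp [conj_hadKet]

lemma conj_psiAll {n i t : ℕ} (h : i ≤ n) (b : Fin t → (Fin (i + n) → Bool))
    (wv : (Fin n → Bool) → Bool) :
    (starRingEnd ℂ) (psiAll n i t h (b, wv)) = psiAll n i t h (b, wv) := by
  rw [psiAll_apply h, map_mul, map_sum]
  congr 1
  · rw [map_mul, map_inv₀, map_inv₀, Complex.conj_ofReal, Complex.conj_ofReal]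
  · refine Finset.sum_congr rfl fun P _ => ?_
    rw [map_mul, conj_gg, apply_ite (starRingEnd ℂ), map_one, map_zero]

lemma KK (n i t : ℕ) (h : i ≤ n) :
    ((((Real.sqrt (2 ^ ((n + i) * t)) : ℝ) : ℂ)⁻¹ *
        ((Real.sqrt (2 ^ ((n - i) * t)) : ℝ) : ℂ)⁻¹) *
      (((Real.sqrt (2 ^ ((n + i) * t)) : ℝ) : ℂ)⁻¹ *
        ((Real.sqrt (2 ^ ((n - i) * t)) : ℝ) : ℂ)⁻¹)) =
    (((2:ℂ) ^ n) ^ t)⁻¹ * (((2:ℂ) ^ n) ^ t)⁻¹ := by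
  have e1 : ∀ m : ℕ, ((Real.sqrt (2 ^ m) : ℝ) : ℂ)⁻¹ * ((Real.sqrt (2 ^ m) : ℝ) : ℂ)⁻¹ =
      ((2:ℂ) ^ m)⁻¹ := by
    intro m
    rw [← mul_inv, ← Complex.ofReal_mul, Real.mul_self_sqrt (by positivity)]
    norm_num
  rw [mul_mul_mul_comm, e1, e1, ← mul_inv, ← pow_add, ← mul_inv, ← pow_mul, ← pow_add]
  congr 1
  rw [← Nat.add_mul, ← Nat.add_mul]
  have e : n + i + (n - i) = n + n := by omega
  rw [e]

lemma rhs_eq (n i t : ℕ) (h : i ≤ n) (a a' : Fin t → (Fin (i + n) → Bool)) :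
    ∑ w : (Fin n → Bool) → Bool,
      psiAll n i t h (a, w) * (starRingEnd ℂ) (psiAll n i t h (a', w)) = NF n i t h a a' := by
  classical
  simp only [conj_psiAll h]
  simp only [psiAll_apply h]
  set K : ℂ := ((Real.sqrt (2 ^ ((n + i) * t)) : ℝ) : ℂ)⁻¹ *
      ((Real.sqrt (2 ^ ((n - i) * t)) : ℝ) : ℂ)⁻¹ with hK
  have step1 : ∀ w : (Fin n → Bool) → Bool,
      (K * ∑ P : PT n i t, gg n i t a P * (if w = uu n i t h P then 1 else 0)) *
      (K * ∑ Q : PT n i t, gg n i t a' Q * (if w = uu n i t h Q then 1 else 0)) =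
      (K * K) * ∑ P : PT n i t, ∑ Q : PT n i t,
        (gg n i t a P * (if w = uu n i t h P then 1 else 0)) *
        (gg n i t a' Q * (if w = uu n i t h Q then 1 else 0)) := fun w => by
    rw [mul_mul_mul_comm, Finset.sum_mul_sum]
  simp only [step1]
  rw [← Finset.mul_sum, hK, KK n i t h]
  unfold NF
  congr 1
  rw [sum_comm3]
  refine Finset.sum_congr rfl fun P _ => ?_
  refine Finset.sum_congr rfl fun Q _ => ?_
  have : ∀ w : (Fin n → Bool) → Bool,
      (gg n i t a P * (if w = uu n i t h P then 1 else 0)) *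
      (gg n i t a' Q * (if w = uu n i t h Q then 1 else 0)) =
      (gg n i t a P * gg n i t a' Q) *
        ((if w = uu n i t h P then 1 else 0) * (if w = uu n i t h Q then 1 else 0)) := fun w =>
    by ring
  simp only [this]
  rw [← Finset.mul_sum, ind_sum, mul_assoc]

/-- `2^{-N} Σ_f (|ψ_f⟩⟨ψ_f|)^{⊗t} = Tr_E |ψ_all⟩⟨ψ_all|`, as matrices indexed by
`t`-tuples of `(n+i)`-bit strings. -/
theorem purification_identity (n i t : ℕ) (hn : 1 ≤ n) (h : i ≤ n) (ht : 1 ≤ t) :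
    ∀ a a' : Fin t → (Fin (i + n) → Bool),
      ((2 : ℂ) ^ (2 ^ n))⁻¹ *
          ∑ f : (Fin n → Bool) → Bool,
            (∏ j : Fin t, psiF n i h f (a j)) *
              (starRingEnd ℂ) (∏ j : Fin t, psiF n i h f (a' j)) =
        ∑ w : (Fin n → Bool) → Bool,
          psiAll n i t h (a, w) * (starRingEnd ℂ) (psiAll n i t h (a', w)) := by
  intro a a'
  exact (lhs_eq n i t h a a').trans (rhs_eq n i t h a a').symm
end
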